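/- Let ζ ∈ (0,1], θ ∈ (π−πζ, π−πζ/2), 1 < b < (πζ/2)/(π−πζ/2−θ), a > 0, and let c > 0 satisfy c = cos(bζ^{-1}(π−πζ/2−θ)) > 0. Then for every ε > 0 and every z ∈ ℂ, the function λ ↦ e^{−ε(a−λ)^{b/ζ}} E_ζ(z^ζ λ) satisfies |e^{−ε(a−λ)^{b/ζ}} E_ζ(z^ζ λ)| ≤ c_ζ e^{−ε|a−λ|^{b/ζ} c + |z||λ|^{1/ζ}} for all λ with a−λ ∈ Σ_{π−πζ/2−θ}, where c_ζ is a constant depending only on ζ. In particular, since b > 1, the right-hand side tends to 0 as |λ| → ∞ along such λ, for each fixed z and ε. -/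

import Mathlib

/-!
The Mittag-Leffler series is dominated term by term by the exponential series: log-convexity of
`Γ` between `x + 1` and `x + 2` together with weighted AM-GM gives
`s ^ x / Γ(x + 1) ≤ s ^ (m + 1) / (m + 1)! + 2 s ^ m / m!` for `m = ⌊x⌋₊`, and at most `⌈1/ζ⌉₊`
indices `k` share the value `⌊ζ k⌋₊`, so `‖E_ζ(u)‖ ≤ 3 ⌈1/ζ⌉₊ exp (‖u‖ ^ (1/ζ))`. On the sector,
`Re (w ^ β) ≥ ‖w‖ ^ β cos (β φ)` bounds the regularizing factor, and since `b/ζ > 1/ζ` the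
term `-ε c ‖a - λ‖ ^ (b/ζ)` dominates `‖z‖ ‖λ‖ ^ (1/ζ)` as `‖λ‖ → ∞`.
-/

open Real Complex Filter Finset Topology
open scoped Nat

namespace Real

lemma factorial_floor_succ_le_Gamma_mul_rpow {x : ℝ} (hx : 0 ≤ x) :
    ((⌊x⌋₊ + 1)! : ℝ) ≤ Real.Gamma (x + 1) * (x + 1) ^ ((⌊x⌋₊ : ℝ) + 1 - x) := by
  set m := ⌊x⌋₊
  set δ := x - m
  have hδ0 : 0 ≤ δ := sub_nonneg.2 (Nat.floor_le hx)
  have hδ1 : 0 ≤ 1 - δ := by linarith [Nat.lt_floor_add_one x]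
  have hx1 : 0 < x + 1 := by linarith
  have hΓ : 0 < Real.Gamma (x + 1) := Real.Gamma_pos_of_pos hx1
  have hconv := convexOn_log_Gamma.2 (Set.mem_Ioi.2 hx1)
    (Set.mem_Ioi.2 (by linarith : (0 : ℝ) < x + 2)) hδ0 hδ1 (add_sub_cancel δ 1)
  have hmid : δ * (x + 1) + (1 - δ) * (x + 2) = ((m + 1 : ℕ) : ℝ) + 1 := by
    simp only [δ]; push_cast; ring
  have hΓ2 : Real.Gamma (x + 2) = (x + 1) * Real.Gamma (x + 1) := by
    rw [← Real.Gamma_add_one hx1.ne']; ring_nf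
  simp only [smul_eq_mul, Function.comp_apply] at hconv
  rw [hmid, Real.Gamma_nat_eq_factorial, hΓ2, Real.log_mul hx1.ne' hΓ.ne'] at hconv
  rw [← Real.log_le_log_iff (by positivity) (by positivity), Real.log_mul hΓ.ne' (by positivity),
    Real.log_rpow hx1, show (m : ℝ) + 1 - x = 1 - δ by ring]
  linarith

lemma rpow_div_Gamma_add_one_le {s x : ℝ} (hs : 0 ≤ s) (hx : 0 ≤ x) :
    s ^ x / Real.Gamma (x + 1) ≤
      s ^ (⌊x⌋₊ + 1) / ((⌊x⌋₊ + 1)! : ℝ) + 2 * s ^ ⌊x⌋₊ / (⌊x⌋₊ ! : ℝ) := by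
  set m := ⌊x⌋₊
  set δ := x - m
  have hδ0 : 0 ≤ δ := sub_nonneg.2 (Nat.floor_le hx)
  have hδ1 : 0 ≤ 1 - δ := by linarith [Nat.lt_floor_add_one x]
  have hx1 : 0 < x + 1 := by linarith
  have hxm : x + 1 ≤ m + 2 := by linarith [Nat.lt_floor_add_one x]
  have hamgm : s ^ x * (x + 1) ^ ((m : ℝ) + 1 - x) ≤ s ^ (m + 1) + s ^ m * (m + 2) := by
    have hyoung := Real.geom_mean_le_arith_mean2_weighted hδ0 hδ1 hs hx1.le (add_sub_cancel δ 1)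
    rw [show x = m + δ by ring, Real.rpow_add_of_nonneg hs (Nat.cast_nonneg m) hδ0,
      Real.rpow_natCast, show (m : ℝ) + 1 - (m + δ) = 1 - δ by ring, mul_assoc, pow_succ]
    calc s ^ m * (s ^ δ * (m + δ + 1) ^ (1 - δ))
        ≤ s ^ m * (δ * s + (1 - δ) * (x + 1)) := by gcongr; simpa [δ] using hyoung
      _ ≤ s ^ m * (s + (m + 2)) := by
        gcongr s ^ m * (?_ + ?_)
        · nlinarith [mul_nonneg hδ1 hs]
        · nlinarith [mul_nonneg hδ0 hx1.le]
      _ = s ^ m * s + s ^ m * (m + 2) := by ring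
  have hfac : ((m + 1)! : ℝ) = (m + 1) * m ! := by push_cast [Nat.factorial_succ]; ring
  calc s ^ x / Real.Gamma (x + 1)
      ≤ s ^ x * (x + 1) ^ ((m : ℝ) + 1 - x) / ((m + 1)! : ℝ) := by
        rw [div_le_div_iff₀ (Real.Gamma_pos_of_pos hx1) (by positivity)]
        have := mul_le_mul_of_nonneg_left (factorial_floor_succ_le_Gamma_mul_rpow hx)
          (Real.rpow_nonneg hs x)
        linarith
    _ ≤ (s ^ (m + 1) + s ^ m * (m + 2)) / ((m + 1)! : ℝ) := by gcongr
    _ ≤ s ^ (m + 1) / ((m + 1)! : ℝ) + 2 * s ^ m / (m ! : ℝ) := by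
        rw [add_div, hfac]
        gcongr _ + ?_
        rw [div_le_div_iff₀ (by positivity) (by positivity)]
        nlinarith [mul_nonneg (mul_nonneg (pow_nonneg hs m) (Nat.cast_nonneg m))
          (Nat.cast_nonneg (m !) : (0 : ℝ) ≤ m !)]

lemma sum_range_exp_majorant_le {s : ℝ} (hs : 0 ≤ s) (n : ℕ) :
    ∑ m ∈ range n, (s ^ (m + 1) / ((m + 1)! : ℝ) + 2 * s ^ m / (m ! : ℝ)) ≤ 3 * Real.exp s := by
  have hshift : ∑ m ∈ range n, s ^ (m + 1) / ((m + 1)! : ℝ) ≤ Real.exp s := by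
    have := Real.sum_le_exp_of_nonneg hs (n + 1)
    rw [sum_range_succ'] at this
    simp only [pow_zero, Nat.factorial_zero, Nat.cast_one, div_one] at this
    linarith
  have htwice : ∑ m ∈ range n, 2 * s ^ m / (m ! : ℝ) ≤ 2 * Real.exp s := by
    simp only [mul_div_assoc, ← mul_sum]
    gcongr
    exact Real.sum_le_exp_of_nonneg hs n
  rw [sum_add_distrib]
  linarith

end Real

lemma card_filter_floor_mul_eq_le {ζ : ℝ} (hζ : 0 < ζ) (S : Finset ℕ) (m : ℕ) :
    #(S.filter fun k : ℕ => ⌊ζ * k⌋₊ = m) ≤ ⌈1 / ζ⌉₊ := by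
  have hsub : S.filter (fun k : ℕ => ⌊ζ * k⌋₊ = m) ⊆ Ico ⌈m / ζ⌉₊ ⌈(m + 1) / ζ⌉₊ := by
    intro k hk
    obtain ⟨-, hfloor⟩ := mem_filter.1 hk
    have hlo : (m : ℝ) ≤ ζ * k := hfloor ▸ Nat.floor_le (by positivity)
    have hhi : ζ * k < m + 1 := hfloor ▸ Nat.lt_floor_add_one _
    rw [mem_Ico, Nat.ceil_le, Nat.lt_ceil, div_le_iff₀ hζ, lt_div_iff₀ hζ]
    constructor <;> linarith
  have hceil : ⌈(m + 1) / ζ⌉₊ ≤ ⌈m / ζ⌉₊ + ⌈1 / ζ⌉₊ := by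
    rw [add_div]; exact Nat.ceil_add_le _ _
  have := card_le_card hsub
  rw [Nat.card_Ico] at this
  omega

lemma sum_comp_floor_mul_le {ζ : ℝ} (hζ : 0 < ζ) {g : ℕ → ℝ} (hg : ∀ m, 0 ≤ g m) {B : ℝ}
    (hB : ∀ n, ∑ m ∈ range n, g m ≤ B) (S : Finset ℕ) :
    ∑ k ∈ S, g ⌊ζ * k⌋₊ ≤ ⌈1 / ζ⌉₊ * B := by
  obtain ⟨n, hn⟩ := (S.image fun k : ℕ => ⌊ζ * k⌋₊).exists_nat_subset_range
  rw [sum_comp]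
  calc ∑ m ∈ S.image (fun k : ℕ => ⌊ζ * k⌋₊), #(S.filter fun k : ℕ => ⌊ζ * k⌋₊ = m) • g m
      ≤ ∑ m ∈ S.image (fun k : ℕ => ⌊ζ * k⌋₊), (⌈1 / ζ⌉₊ : ℝ) * g m := by
        gcongr with m
        rw [nsmul_eq_mul]
        gcongr
        · exact hg m
        · exact_mod_cast card_filter_floor_mul_eq_le hζ S m
    _ ≤ ∑ m ∈ range n, (⌈1 / ζ⌉₊ : ℝ) * g m :=
        sum_le_sum_of_subset_of_nonneg hn fun m _ _ => mul_nonneg (Nat.cast_nonneg _) (hg m)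
    _ ≤ ⌈1 / ζ⌉₊ * B := by
        rw [← mul_sum]
        gcongr
        exact hB n

lemma Real.sum_rpow_mul_div_Gamma_le {ζ s : ℝ} (hζ : 0 < ζ) (hs : 0 ≤ s) (S : Finset ℕ) :
    ∑ k ∈ S, s ^ (ζ * k) / Real.Gamma (ζ * k + 1) ≤ 3 * ⌈1 / ζ⌉₊ * Real.exp s := by
  let g : ℕ → ℝ := fun m => s ^ (m + 1) / ((m + 1)! : ℝ) + 2 * s ^ m / (m ! : ℝ)
  calc ∑ k ∈ S, s ^ (ζ * k) / Real.Gamma (ζ * k + 1)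
      ≤ ∑ k ∈ S, g ⌊ζ * k⌋₊ :=
        sum_le_sum fun k _ => Real.rpow_div_Gamma_add_one_le hs (by positivity)
    _ ≤ ⌈1 / ζ⌉₊ * (3 * Real.exp s) :=
        sum_comp_floor_mul_le hζ (fun m => by positivity) (Real.sum_range_exp_majorant_le hs) S
    _ = 3 * ⌈1 / ζ⌉₊ * Real.exp s := by ring

/-- The Mittag-Leffler function `E_ζ`. -/
noncomputable def mittagLeffler (ζ : ℝ) (u : ℂ) : ℂ :=
  ∑' k : ℕ, u ^ k / Complex.Gamma (ζ * k + 1)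

lemma norm_mittagLeffler_le {ζ : ℝ} (hζ : 0 < ζ) (u : ℂ) :
    ‖mittagLeffler ζ u‖ ≤ 3 * ⌈1 / ζ⌉₊ * Real.exp (‖u‖ ^ (1 / ζ)) := by
  have hterm : ∀ k : ℕ, ‖u ^ k / Complex.Gamma (ζ * k + 1)‖ =
      (‖u‖ ^ (1 / ζ)) ^ (ζ * k) / Real.Gamma (ζ * k + 1) := by
    intro k
    rw [norm_div, norm_pow, show (ζ : ℂ) * k + 1 = ((ζ * k + 1 : ℝ) : ℂ) by push_cast; ring,
      Complex.Gamma_ofReal, Complex.norm_of_nonneg (Real.Gamma_pos_of_pos (by positivity)).le,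
      ← Real.rpow_mul (norm_nonneg u), show 1 / ζ * (ζ * k) = k by field_simp, Real.rpow_natCast]
  have hpartial : ∀ n, ∑ k ∈ range n, ‖u ^ k / Complex.Gamma (ζ * k + 1)‖ ≤
      3 * ⌈1 / ζ⌉₊ * Real.exp (‖u‖ ^ (1 / ζ)) := fun n => by
    simp only [hterm]
    exact Real.sum_rpow_mul_div_Gamma_le hζ (by positivity) _
  exact (norm_tsum_le_tsum_norm (summable_of_sum_range_le (fun _ => norm_nonneg _) hpartial)).trans
    (Real.tsum_le_of_sum_range_le (fun _ => norm_nonneg _) hpartial)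

lemma Complex.norm_exp_neg_mul_cpow_le {ε β ψ : ℝ} (hε : 0 ≤ ε) (hβ : 0 ≤ β) (hβψ : β * ψ ≤ π)
    {w : ℂ} (harg : |arg w| ≤ ψ) :
    ‖Complex.exp (-ε * w ^ (β : ℂ))‖ ≤ Real.exp (-ε * ‖w‖ ^ β * Real.cos (β * ψ)) := by
  have hcos : Real.cos (β * ψ) ≤ Real.cos (arg w * β) := by
    rw [← Real.cos_abs (arg w * β), abs_mul, abs_of_nonneg hβ]
    exact Real.cos_le_cos_of_nonneg_of_le_pi (by positivity) hβψ (by rw [mul_comm]; gcongr)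
  rw [Complex.norm_exp, show -(ε : ℂ) = ((-ε : ℝ) : ℂ) by push_cast; ring, Complex.re_ofReal_mul,
    Complex.cpow_ofReal_re, Real.exp_le_exp]
  nlinarith [mul_le_mul_of_nonneg_left hcos (Real.rpow_nonneg (norm_nonneg w) β)]

lemma tendsto_mul_rpow_sub_mul_rpow_atBot {α β κ : ℝ} (C : ℝ) (hβ : 0 < β) (hαβ : α < β)
    (hκ : 0 < κ) : Tendsto (fun t : ℝ => C * t ^ α - κ * t ^ β) atTop atBot := by
  have hlim : Tendsto (fun t : ℝ => C * t ^ (-(β - α)) - κ) atTop (𝓝 (-κ)) := by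
    simpa using ((tendsto_rpow_neg_atTop (sub_pos.2 hαβ)).const_mul C).sub_const κ
  refine ((tendsto_rpow_atTop hβ).atTop_mul_neg (neg_neg_of_pos hκ) hlim).congr' ?_
  filter_upwards [eventually_gt_atTop 0] with t ht
  rw [mul_sub, mul_left_comm, ← Real.rpow_add ht]
  ring_nf

lemma tendsto_neg_mul_norm_sub_rpow_add_mul_norm_rpow_atBot {E : Type*}
    [SeminormedAddCommGroup E] (a : E) {α β κ : ℝ} (C : ℝ) (hβ : 0 < β) (hαβ : α < β)
    (hκ : 0 < κ) :
    Tendsto (fun x : E => -κ * ‖a - x‖ ^ β + C * ‖x‖ ^ α) (comap norm atTop) atBot := by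
  have hnorm : Tendsto (norm : E → ℝ) (comap norm atTop) atTop := tendsto_comap
  refine tendsto_atBot_mono' _ ?_ ((tendsto_mul_rpow_sub_mul_rpow_atBot C hβ hαβ
    (div_pos hκ (Real.rpow_pos_of_pos two_pos β))).comp hnorm)
  filter_upwards [hnorm.eventually_ge_atTop (2 * ‖a‖)] with x hx
  have hhalf : ‖x‖ / 2 ≤ ‖a - x‖ := by rw [norm_sub_rev]; linarith [norm_sub_norm_le x a]
  have hpow := Real.rpow_le_rpow (by positivity) hhalf hβ.le
  rw [Real.div_rpow (norm_nonneg x) zero_le_two] at hpow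
  have := mul_le_mul_of_nonneg_left hpow hκ.le
  simp only [Function.comp_apply]
  rw [div_mul_eq_mul_div, mul_div_assoc]
  linarith

theorem regularized_mittagLeffler_decay_general (ζ θ b a c : ℝ) (hζ0 : 0 < ζ)
    (hθ2 : θ < π - π * ζ / 2)
    (hb1 : 1 < b) (hb2 : b < (π * ζ / 2) / (π - π * ζ / 2 - θ))
    (hc : c = Real.cos (b / ζ * (π - π * ζ / 2 - θ))) (hcpos : 0 < c) :
    ∃ cζ : ℝ, 0 < cζ ∧
      (∀ ε : ℝ, 0 < ε → ∀ z lam : ℂ,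
        ((a : ℂ) - lam ≠ 0 ∧ |Complex.arg ((a : ℂ) - lam)| < π - π * ζ / 2 - θ) →
        ‖Complex.exp (-(ε : ℂ) * ((a : ℂ) - lam) ^ ((b / ζ : ℝ) : ℂ)) *
            ∑' k : ℕ, (z ^ (ζ : ℂ) * lam) ^ k / Complex.Gamma (ζ * k + 1)‖ ≤
          cζ * Real.exp (-ε * ‖(a : ℂ) - lam‖ ^ (b / ζ) * c +
            ‖z‖ * ‖lam‖ ^ (1 / ζ))) ∧
      (∀ ε : ℝ, 0 < ε → ∀ z : ℂ,
        Tendsto (fun lam : ℂ =>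
            cζ * Real.exp (-ε * ‖(a : ℂ) - lam‖ ^ (b / ζ) * c +
              ‖z‖ * ‖lam‖ ^ (1 / ζ)))
          ((Filter.comap (fun w : ℂ => ‖w‖) Filter.atTop) ⊓
            Filter.principal {lam : ℂ |
              (a : ℂ) - lam ≠ 0 ∧ |Complex.arg ((a : ℂ) - lam)| < π - π * ζ / 2 - θ})
          (nhds 0)) := by
  have hφ : 0 < π - π * ζ / 2 - θ := by linarith
  have hβφ : b / ζ * (π - π * ζ / 2 - θ) ≤ π := by
    have := (lt_div_iff₀ hφ).1 hb2
    rw [div_mul_eq_mul_div, div_le_iff₀ hζ0]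
    nlinarith [pi_pos]
  have hceil : (0 : ℝ) < ⌈1 / ζ⌉₊ := Nat.cast_pos.2 (Nat.ceil_pos.2 (by positivity))
  refine ⟨3 * ⌈1 / ζ⌉₊, by positivity, fun ε hε z lam hlam => ?_, fun ε hε z => ?_⟩
  · have hE := norm_mittagLeffler_le hζ0 (z ^ (ζ : ℂ) * lam)
    rw [norm_mul, Complex.norm_cpow_real, Real.mul_rpow (by positivity) (norm_nonneg _), one_div,
      Real.rpow_rpow_inv (norm_nonneg z) hζ0.ne', ← one_div] at hE
    rw [norm_mul, Real.exp_add, hc]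
    calc _ ≤ Real.exp (-ε * ‖(a : ℂ) - lam‖ ^ (b / ζ) * Real.cos (b / ζ * (π - π * ζ / 2 - θ))) *
          (3 * ⌈1 / ζ⌉₊ * Real.exp (‖z‖ * ‖lam‖ ^ (1 / ζ))) :=
          mul_le_mul (Complex.norm_exp_neg_mul_cpow_le hε.le (by positivity) hβφ hlam.2.le) hE
            (norm_nonneg _) (by positivity)
      _ = _ := by ring
  · have hG := tendsto_neg_mul_norm_sub_rpow_add_mul_norm_rpow_atBot (a : ℂ) ‖z‖
      (by positivity : 0 < b / ζ) (by gcongr : 1 / ζ < b / ζ) (mul_pos hε hcpos)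
    simpa [mul_comm, mul_left_comm, mul_assoc] using
      ((Real.tendsto_exp_atBot.comp hG).const_mul (3 * ⌈1 / ζ⌉₊ : ℝ)).mono_left inf_le_left

/-- Decay estimate for the regularized Mittag-Leffler integrand:
`|e^{−ε(a−λ)^{b/ζ}} E_ζ(z^ζ λ)| ≤ c_ζ e^{−ε|a−λ|^{b/ζ} c + |z||λ|^{1/ζ}}`
for `λ` with `a−λ ∈ Σ_{π−πζ/2−θ}`, where `c = cos(bζ^{-1}(π−πζ/2−θ)) > 0`;
in particular (since `b > 1`), for each fixed `z` and `ε > 0` the right-hand side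
tends to `0` as `|λ| → ∞` along such `λ`. -/
theorem regularized_mittagLeffler_decay (ζ θ b a c : ℝ) (hζ0 : 0 < ζ) (hζ1 : ζ ≤ 1)
    (hθ1 : π - π * ζ < θ) (hθ2 : θ < π - π * ζ / 2)
    (hb1 : 1 < b) (hb2 : b < (π * ζ / 2) / (π - π * ζ / 2 - θ)) (ha : 0 < a)
    (hc : c = Real.cos (b / ζ * (π - π * ζ / 2 - θ))) (hcpos : 0 < c) :
    ∃ cζ : ℝ, 0 < cζ ∧
      (∀ ε : ℝ, 0 < ε → ∀ z lam : ℂ,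
        ((a : ℂ) - lam ≠ 0 ∧ |Complex.arg ((a : ℂ) - lam)| < π - π * ζ / 2 - θ) →
        ‖Complex.exp (-(ε : ℂ) * ((a : ℂ) - lam) ^ ((b / ζ : ℝ) : ℂ)) *
            ∑' k : ℕ, (z ^ (ζ : ℂ) * lam) ^ k / Complex.Gamma (ζ * k + 1)‖ ≤
          cζ * Real.exp (-ε * ‖(a : ℂ) - lam‖ ^ (b / ζ) * c +
            ‖z‖ * ‖lam‖ ^ (1 / ζ))) ∧
      (∀ ε : ℝ, 0 < ε → ∀ z : ℂ,
        Tendsto (fun lam : ℂ =>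
            cζ * Real.exp (-ε * ‖(a : ℂ) - lam‖ ^ (b / ζ) * c +
              ‖z‖ * ‖lam‖ ^ (1 / ζ)))
          ((Filter.comap (fun w : ℂ => ‖w‖) Filter.atTop) ⊓
            Filter.principal {lam : ℂ |
              (a : ℂ) - lam ≠ 0 ∧ |Complex.arg ((a : ℂ) - lam)| < π - π * ζ / 2 - θ})
          (nhds 0)) :=
  regularized_mittagLeffler_decay_general ζ θ b a c hζ0 hθ2 hb1 hb2 hc hcpos
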